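/- Let f : ℝ^d → ℝ be L-smooth and u uniform on the sphere of radius d^{1/4} in ℝ^d. Define Δ(x;u) = (f(x+λu) − f(x−λu))/(2λ). Then ‖E_u[Δ(x;u) u] − (1/√d) ∇f(x)‖ ≤ (L λ d^{3/4})/2. -/

import Mathlib

/-!
The symmetric difference quotient differs from the directional derivative `⟪∇f(x), u⟫` by at
most `L λ ‖u‖² / 2`: apply the descent-lemma bound `|f(x+h) - f(x) - ⟪∇f(x), h⟫| ≤ L‖h‖²/2`
at `h = ±λu`. On the other hand, invariance of `μ` under coordinate reflections and
permutations forces `E[u uᵀ] = (r²/d) I`, so `E[⟪∇f(x), u⟫ u] = (r²/d) ∇f(x)`. Hence the bias is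
at most `E[L λ ‖u‖³ / 2] = L λ r³ / 2`, and for `r = d^{1/4}` we have `r²/d = 1/√d`.
-/

open MeasureTheory

noncomputable section

/-- `μ` is the uniform distribution on the sphere of radius `r` in `ℝ^n`. -/
def IsUniformSphere {n : ℕ} (μ : Measure (EuclideanSpace ℝ (Fin n))) (r : ℝ) : Prop :=
  IsProbabilityMeasure μ ∧ (∀ᵐ u ∂μ, ‖u‖ = r) ∧
    ∀ O : EuclideanSpace ℝ (Fin n) ≃ₗᵢ[ℝ] EuclideanSpace ℝ (Fin n), μ.map O = μ

open Set
open scoped RealInnerProductSpace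

section Smooth

variable {E : Type*} [NormedAddCommGroup E] [InnerProductSpace ℝ E] [CompleteSpace E]
  {f : E → ℝ} {L : ℝ}

theorem abs_sub_sub_inner_gradient_le (hf : Differentiable ℝ f)
    (hL : ∀ x y, ‖gradient f x - gradient f y‖ ≤ L * ‖x - y‖) (x h : E) :
    |f (x + h) - f x - ⟪gradient f x, h⟫| ≤ L * ‖h‖ ^ 2 / 2 := by
  set φ : ℝ → ℝ := fun t => f (x + t • h) - f x - t * ⟪gradient f x, h⟫
  have hφ (t : ℝ) : HasDerivAt φ ⟪gradient f (x + t • h) - gradient f x, h⟫ t := by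
    have hline : HasDerivAt (fun t : ℝ => x + t • h) h t := by
      simpa using ((hasDerivAt_id t).smul_const h).const_add x
    have := (((hf _).hasFDerivAt.comp_hasDerivAt t hline).sub_const (f x)).sub
      ((hasDerivAt_id t).mul_const ⟪gradient f x, h⟫)
    exact this.congr_deriv (by simp [inner_sub_left, inner_gradient_left])
  have hB (t : ℝ) : HasDerivAt (fun t => L * ‖h‖ ^ 2 * t ^ 2 / 2) (L * ‖h‖ ^ 2 * t) t :=
    (((hasDerivAt_pow 2 t).const_mul (L * ‖h‖ ^ 2)).div_const 2).congr_deriv (by norm_num; ring)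
  have hderiv_le (t : ℝ) (ht : t ∈ Ico (0 : ℝ) 1) :
      ‖⟪gradient f (x + t • h) - gradient f x, h⟫‖ ≤ L * ‖h‖ ^ 2 * t :=
    calc ‖⟪gradient f (x + t • h) - gradient f x, h⟫‖
        ≤ ‖gradient f (x + t • h) - gradient f x‖ * ‖h‖ := norm_inner_le_norm _ _
      _ ≤ L * ‖x + t • h - x‖ * ‖h‖ := by gcongr; exact hL _ _
      _ = L * ‖h‖ ^ 2 * t := by
        rw [add_sub_cancel_left, norm_smul, Real.norm_of_nonneg ht.1]; ring
  have := image_norm_le_of_norm_deriv_right_le_deriv_boundary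
    (fun t _ => (hφ t).continuousAt.continuousWithinAt) (fun t _ => (hφ t).hasDerivWithinAt)
    (by simp [φ]) hB hderiv_le (right_mem_Icc.2 zero_le_one)
  simpa [φ] using this

/-- The two-point estimator `Δ(x; u)`. -/
def twoPointQuotient (f : E → ℝ) (lam : ℝ) (x u : E) : ℝ :=
  (f (x + lam • u) - f (x - lam • u)) / (2 * lam)

theorem abs_twoPointQuotient_sub_inner_gradient_le (hf : Differentiable ℝ f)
    (hL : ∀ x y, ‖gradient f x - gradient f y‖ ≤ L * ‖x - y‖) {lam : ℝ} (hlam : 0 < lam)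
    (x u : E) :
    |twoPointQuotient f lam x u - ⟪gradient f x, u⟫| ≤ L * lam * ‖u‖ ^ 2 / 2 := by
  have hplus := abs_sub_sub_inner_gradient_le hf hL x (lam • u)
  have hminus := abs_sub_sub_inner_gradient_le hf hL x (-(lam • u))
  rw [← sub_eq_add_neg, norm_neg, inner_neg_right] at hminus
  have hsplit : twoPointQuotient f lam x u - ⟪gradient f x, u⟫ =
      ((f (x + lam • u) - f x - ⟪gradient f x, lam • u⟫)
        - (f (x - lam • u) - f x - -⟪gradient f x, lam • u⟫)) / (2 * lam) := by
    rw [twoPointQuotient, real_inner_smul_right]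
    field_simp
    ring
  have h2lam : (0 : ℝ) < 2 * lam := by positivity
  rw [hsplit, abs_div, abs_of_pos h2lam, div_le_iff₀ h2lam]
  calc _ ≤ L * ‖lam • u‖ ^ 2 / 2 + L * ‖lam • u‖ ^ 2 / 2 :=
        (abs_sub _ _).trans (add_le_add hplus hminus)
    _ = L * lam * ‖u‖ ^ 2 / 2 * (2 * lam) := by
      rw [norm_smul, Real.norm_of_nonneg hlam.le]; ring

end Smooth

theorem Continuous.integrable_of_ae_norm_eq {E F : Type*} [NormedAddCommGroup E]
    [ProperSpace E] [MeasurableSpace E] [BorelSpace E] [NormedAddCommGroup F]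
    {μ : Measure E} [IsFiniteMeasure μ] {φ : E → F} (hφ : Continuous φ) {r : ℝ}
    (hr : ∀ᵐ u ∂μ, ‖u‖ = r) : Integrable φ μ := by
  have hsphere : ∀ᵐ u ∂μ, u ∈ Metric.sphere (0 : E) r := by simpa using hr
  have := hφ.continuousOn.integrableOn_compact (μ := μ) (isCompact_sphere (0 : E) r)
  rwa [IntegrableOn, Measure.restrict_eq_self_of_ae_mem hsphere] at this

theorem LinearIsometryEquiv.integral_comp_of_map_eq {E F : Type*} [NormedAddCommGroup E]
    [InnerProductSpace ℝ E] [MeasurableSpace E] [BorelSpace E] [NormedAddCommGroup F]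
    [NormedSpace ℝ F] {μ : Measure E} (O : E ≃ₗᵢ[ℝ] E) (hO : μ.map O = μ) (φ : E → F) :
    ∫ u, φ (O u) ∂μ = ∫ u, φ u ∂μ :=
  MeasurePreserving.integral_comp ⟨O.continuous.measurable, hO⟩
    O.toHomeomorph.measurableEmbedding φ

section Isotropy

variable {ι : Type*} [Fintype ι] {μ : Measure (EuclideanSpace ℝ ι)}
  (hinv : ∀ O : EuclideanSpace ℝ ι ≃ₗᵢ[ℝ] EuclideanSpace ℝ ι, μ.map O = μ)
include hinv

theorem integral_coord_mul_coord_of_ne {i j : ι} (hij : i ≠ j) : ∫ u, u i * u j ∂μ = 0 := by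
  classical
  let O : EuclideanSpace ℝ ι ≃ₗᵢ[ℝ] EuclideanSpace ℝ ι := LinearIsometryEquiv.piLpCongrRight 2
    fun k => if k = j then LinearIsometryEquiv.neg ℝ else LinearIsometryEquiv.refl ℝ ℝ
  have hflip : ∫ u, O u i * O u j ∂μ = ∫ u, -(u i * u j) ∂μ := by
    congr 1 with u
    simp [O, hij]
  rw [O.integral_comp_of_map_eq (hinv O) (fun u => u i * u j), integral_neg] at hflip
  linarith

theorem integral_coord_sq_eq (i j : ι) : ∫ u, u i ^ 2 ∂μ = ∫ u, u j ^ 2 ∂μ := by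
  classical
  let O : EuclideanSpace ℝ ι ≃ₗᵢ[ℝ] EuclideanSpace ℝ ι :=
    LinearIsometryEquiv.piLpCongrLeft 2 ℝ ℝ (Equiv.swap i j)
  have hswap (u : EuclideanSpace ℝ ι) : O u i = u j := by
    simp [O, Equiv.piCongrLeft']
  simpa [hswap] using (O.integral_comp_of_map_eq (hinv O) (fun u => u i ^ 2)).symm

theorem integral_coord_sq (h2 : Integrable (fun u => ‖u‖ ^ 2) μ) (i : ι) :
    ∫ u, u i ^ 2 ∂μ = (∫ u, ‖u‖ ^ 2 ∂μ) / Fintype.card ι := by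
  have hcoord (k : ι) : Integrable (fun u : EuclideanSpace ℝ ι => u k ^ 2) μ :=
    h2.mono' (by fun_prop : Continuous fun u : EuclideanSpace ℝ ι => u k ^ 2).aestronglyMeasurable
      (ae_of_all _ fun u => by rw [norm_pow]; gcongr; exact PiLp.norm_apply_le u k)
  have hsum : ∫ u, ‖u‖ ^ 2 ∂μ = ∑ k, ∫ u, u k ^ 2 ∂μ := by
    rw [← integral_finsetSum _ fun k _ => hcoord k]
    simp [EuclideanSpace.norm_sq_eq]
  have hcard : (Fintype.card ι : ℝ) ≠ 0 := Nat.cast_ne_zero.2 (Fintype.card_pos_iff.2 ⟨i⟩).ne'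
  rw [hsum, Finset.sum_congr rfl fun k _ => integral_coord_sq_eq hinv k i, Finset.sum_const,
    Finset.card_univ, nsmul_eq_mul, mul_div_cancel_left₀ _ hcard]

theorem integral_inner_smul_eq (h2 : Integrable (fun u => ‖u‖ ^ 2) μ)
    (g : EuclideanSpace ℝ ι) :
    ∫ u, ⟪g, u⟫ • u ∂μ = ((∫ u, ‖u‖ ^ 2 ∂μ) / Fintype.card ι) • g := by
  have hprod (i j : ι) : Integrable (fun u : EuclideanSpace ℝ ι => u j * u i) μ :=
    h2.mono' (by fun_prop : Continuous fun u : EuclideanSpace ℝ ι => u j * u i).aestronglyMeasurable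
      (ae_of_all _ fun u => by
        rw [norm_mul, sq]
        exact mul_le_mul (PiLp.norm_apply_le u j) (PiLp.norm_apply_le u i) (norm_nonneg _)
          (norm_nonneg _))
  have hint : Integrable (fun u : EuclideanSpace ℝ ι => ⟪g, u⟫ • u) μ :=
    (h2.const_mul ‖g‖).mono' (by fun_prop) (ae_of_all _ fun u => by
      rw [norm_smul, sq, ← mul_assoc]
      exact mul_le_mul_of_nonneg_right (norm_inner_le_norm g u) (norm_nonneg u))
  ext i
  calc (∫ u, ⟪g, u⟫ • u ∂μ) i = ∫ u, ∑ j, g j * (u j * u i) ∂μ := by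
        change EuclideanSpace.proj (𝕜 := ℝ) i _ = _
        rw [← (EuclideanSpace.proj i).integral_comp_comm hint]
        congr 1 with u
        simp [PiLp.inner_apply, mul_comm, Finset.mul_sum]
        exact Finset.sum_congr rfl fun j _ => by ring
    _ = ∑ j, g j * ∫ u, u j * u i ∂μ := by
        rw [integral_finsetSum _ fun j _ => (hprod i j).const_mul (g j)]
        simp only [integral_const_mul]
    _ = g i * ∫ u, u i * u i ∂μ := Finset.sum_eq_single i
        (fun j _ hji => by rw [integral_coord_mul_coord_of_ne hinv hji, mul_zero]) (by simp)
    _ = (((∫ u, ‖u‖ ^ 2 ∂μ) / Fintype.card ι) • g) i := by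
        simp [← sq, integral_coord_sq hinv h2 i, mul_comm]

end Isotropy

theorem norm_integral_twoPointQuotient_smul_sub_le {ι : Type*} [Fintype ι]
    {μ : Measure (EuclideanSpace ℝ ι)} [IsProbabilityMeasure μ] {f : EuclideanSpace ℝ ι → ℝ}
    {L lam r : ℝ} (hf : Differentiable ℝ f)
    (hL : ∀ x y, ‖gradient f x - gradient f y‖ ≤ L * ‖x - y‖) (hlam : 0 < lam)
    (hr : ∀ᵐ u ∂μ, ‖u‖ = r)
    (hinv : ∀ O : EuclideanSpace ℝ ι ≃ₗᵢ[ℝ] EuclideanSpace ℝ ι, μ.map O = μ)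
    (x : EuclideanSpace ℝ ι) :
    ‖∫ u, twoPointQuotient f lam x u • u ∂μ - (r ^ 2 / Fintype.card ι) • gradient f x‖
      ≤ L * lam * r ^ 3 / 2 := by
  have hnorm_sq : ∫ u, ‖u‖ ^ 2 ∂μ = r ^ 2 := by
    rw [integral_congr_ae (hr.mono fun u hu => congrArg (· ^ 2) hu)]
    simp
  have hcont : Continuous (twoPointQuotient f lam x) := by
    have := hf.continuous
    unfold twoPointQuotient
    fun_prop
  have hΔ : Integrable (fun u => twoPointQuotient f lam x u • u) μ :=
    (hcont.smul continuous_id).integrable_of_ae_norm_eq hr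
  have hinner : Integrable (fun u => ⟪gradient f x, u⟫ • u) μ :=
    (by fun_prop : Continuous fun u => ⟪gradient f x, u⟫ • u).integrable_of_ae_norm_eq hr
  rw [← hnorm_sq, ← integral_inner_smul_eq hinv
      ((continuous_norm.pow 2).integrable_of_ae_norm_eq hr) (gradient f x),
    ← integral_sub hΔ hinner]
  calc _ ≤ L * lam * r ^ 3 / 2 * μ.real univ := norm_integral_le_of_norm_le_const <| by
        filter_upwards [hr] with u hu
        rw [← sub_smul, norm_smul, Real.norm_eq_abs, ← hu]
        calc _ ≤ L * lam * ‖u‖ ^ 2 / 2 * ‖u‖ := mul_le_mul_of_nonneg_right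
              (abs_twoPointQuotient_sub_inner_gradient_le hf hL hlam x u) (norm_nonneg u)
          _ = L * lam * ‖u‖ ^ 3 / 2 := by ring
    _ = L * lam * r ^ 3 / 2 := by simp

theorem Real.rpow_one_fourth_sq_div_self (a : ℝ) (ha : 0 ≤ a) :
    (a ^ (1 / 4 : ℝ)) ^ 2 / a = (√a)⁻¹ := by
  rw [← Real.rpow_mul_natCast ha, show (1 / 4 : ℝ) * (2 : ℕ) = 1 / 2 by norm_num,
    ← Real.sqrt_eq_rpow, Real.sqrt_div_self', one_div]

theorem Real.rpow_one_fourth_pow_three (a : ℝ) (ha : 0 ≤ a) :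
    (a ^ (1 / 4 : ℝ)) ^ 3 = a ^ (3 / 4 : ℝ) := by
  rw [← Real.rpow_mul_natCast ha]
  norm_num

theorem two_point_estimator_bias_radius_d_quarter_general (d : ℕ) (L lam : ℝ)
    (hlam : 0 < lam)
    (f : EuclideanSpace ℝ (Fin d) → ℝ) (hf : Differentiable ℝ f)
    (hL : ∀ x y, ‖gradient f x - gradient f y‖ ≤ L * ‖x - y‖)
    (μ : Measure (EuclideanSpace ℝ (Fin d)))
    (hμ : IsUniformSphere μ ((d : ℝ) ^ ((1 : ℝ) / 4)))
    (x : EuclideanSpace ℝ (Fin d)) :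
    ‖(∫ u, ((f (x + lam • u) - f (x - lam • u)) / (2 * lam)) • u ∂μ)
        - (Real.sqrt d)⁻¹ • gradient f x‖
      ≤ L * lam * (d : ℝ) ^ ((3 : ℝ) / 4) / 2 := by
  obtain ⟨_, hr, hinv⟩ := hμ
  have hbias := norm_integral_twoPointQuotient_smul_sub_le hf hL hlam hr hinv x
  rwa [Fintype.card_fin, Real.rpow_one_fourth_sq_div_self _ d.cast_nonneg,
    Real.rpow_one_fourth_pow_three _ d.cast_nonneg] at hbias

/-- For an `L`-smooth `f` and `u` uniform on the sphere of radius `d^{1/4}`, with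
`Δ(x;u) = (f(x+λu) − f(x−λu))/(2λ)`, we have
`‖E[Δ(x;u) u] − (1/√d) ∇f(x)‖ ≤ L λ d^{3/4} / 2`. -/
theorem two_point_estimator_bias_radius_d_quarter (d : ℕ) (hd : 1 ≤ d) (L lam : ℝ)
    (hlam : 0 < lam)
    (f : EuclideanSpace ℝ (Fin d) → ℝ) (hf : Differentiable ℝ f)
    (hL : ∀ x y, ‖gradient f x - gradient f y‖ ≤ L * ‖x - y‖)
    (μ : Measure (EuclideanSpace ℝ (Fin d)))
    (hμ : IsUniformSphere μ ((d : ℝ) ^ ((1 : ℝ) / 4)))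
    (x : EuclideanSpace ℝ (Fin d)) :
    ‖(∫ u, ((f (x + lam • u) - f (x - lam • u)) / (2 * lam)) • u ∂μ)
        - (Real.sqrt d)⁻¹ • gradient f x‖
      ≤ L * lam * (d : ℝ) ^ ((3 : ℝ) / 4) / 2 :=
  two_point_estimator_bias_radius_d_quarter_general d L lam hlam f hf hL μ hμ x
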